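/- The sum over all even b ≥ 0 and even c ≥ 0 of ( ch SST_n(λ(0,b,c)) − ch SST_n(λ(0,b,c+1)) ) equals ( Σ_{i=0}^{n} e_i ) · ( Σ_{i=0}^{n} (−1)^i e_i ) in ℤ[x_1,…,x_n]. (When a = 0 every tableau has residue 0, so no residue condition is imposed; all but finitely many summands vanish.) -/

import Mathlib

open MvPolynomial

/-- A semistandard tableau of skew shape `λ(a,b,c) = (2^{b+c},1^a)/(1^b)` with entries in
`{1,…,n}` (encoded as `Fin n`), given as a pair `T = (L, R)` of strictly increasing columns:
`L` of height `a+c` (occupying rows `b+1,…,a+b+c`) and `R` of height `b+c` (occupying rows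
`1,…,b+c`), with the row condition `l_j ≤ r_{b+j}` for `1 ≤ j ≤ c` (here `0`-indexed). -/
def IsTab (n a b c : ℕ) (T : (Fin (a + c) → Fin n) × (Fin (b + c) → Fin n)) : Prop :=
  StrictMono T.1 ∧ StrictMono T.2 ∧
    ∀ (j : ℕ) (_ : j < c) (h2 : j < a + c) (h3 : b + j < b + c),
      T.1 ⟨j, h2⟩ ≤ T.2 ⟨b + j, h3⟩

/-- The tableau obtained from `T` by sliding the right column `R` down by `k` positions
(`0 ≤ k ≤ min{a,b}`) is again semistandard, i.e. `l_j ≤ r_{b+j−k}` for all `1 ≤ j ≤ c+k`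
(here `0`-indexed). -/
def Slides (n a b c : ℕ) (T : (Fin (a + c) → Fin n) × (Fin (b + c) → Fin n)) (k : ℕ) : Prop :=
  k ≤ a ∧ k ≤ b ∧
    ∀ (j : ℕ) (_ : j < c + k) (h2 : j < a + c) (h3 : b + j - k < b + c),
      T.1 ⟨j, h2⟩ ≤ T.2 ⟨b + j - k, h3⟩

/-- The residue `𝔯_T`: the maximal `k` such that sliding `R` down by `k` positions keeps the
tableau semistandard (`k = 0` always qualifies for a semistandard tableau). -/
noncomputable def tabResidue (n a b c : ℕ)
    (T : (Fin (a + c) → Fin n) × (Fin (b + c) → Fin n)) : ℕ :=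
  sSup {k | Slides n a b c T k}

/-- The weight monomial `x^T = (∏_j x_{l_j}) · (∏_i x_{r_i})` of a tableau `T`. -/
noncomputable def tabWt (n a b c : ℕ) (T : (Fin (a + c) → Fin n) × (Fin (b + c) → Fin n)) :
    MvPolynomial (Fin n) ℤ :=
  (∏ j, X (T.1 j)) * (∏ i, X (T.2 i))

/-- The weight generating function `ch X = Σ_{T ∈ X} x^T` of a (finite) set of tableaux. -/
noncomputable def tabCh (n a b c : ℕ)
    (Xs : Set ((Fin (a + c) → Fin n) × (Fin (b + c) → Fin n))) : MvPolynomial (Fin n) ℤ :=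
  ∑ᶠ T ∈ Xs, tabWt n a b c T

/-- The `j`-th elementary symmetric polynomial in `x_1, …, x_n` over `ℤ`, indexed by `j : ℤ`,
with the conventions `e_0 = 1` and `e_j = 0` for `j < 0` or `j > n`. -/
noncomputable def eZ (n : ℕ) (j : ℤ) : MvPolynomial (Fin n) ℤ :=
  if 0 ≤ j then esymm (Fin n) ℤ j.toNat else 0

/-- `E_r = Σ_{i=0}^{n} e_i · e_{r+i}` for `r : ℤ`. -/
noncomputable def EZ (n : ℕ) (r : ℤ) : MvPolynomial (Fin n) ℤ :=
  ∑ i ∈ Finset.range (n + 1), eZ n i * eZ n (r + i)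

/-!
With `a = 0` a tableau of shape `λ(0,b,c)` is the same as a pair of sets `L, R ⊆ {1,…,n}` with
`|L| = c`, `|R| = b + c` whose top counts are dominated: `#{l ∈ L | l ≥ k} ≤ #{r ∈ R | r ≥ k}` for
every `k`. Exchanging `L` and `R` above the last level where `L` is ahead maps the non-dominated
pairs of sizes `(c + 1, q)` bijectively onto all pairs of sizes `(c, q + 1)`, so
`ch SST_n(λ(0,b,c+1)) = e_{c+1} e_{b+c+1} - e_c e_{b+c+2}`. The alternating sum over `c` is then
`F_b + F_{b+2}` with `F_b = Σ_c (-1)^c e_c e_{b+c}`, and the sum over even `b` is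
`F_0 + 2 Σ_{b ≥ 2 even} F_b`; the product on the right, split along its diagonals, is
`Σ_b ((-1)^b F_b + F_{b+1})`, the same sum.
-/

open Finset

theorem MvPolynomial.esymm_eq_zero_of_card_lt {σ R : Type*} [Fintype σ] [CommSemiring R] {k : ℕ}
    (hk : Fintype.card σ < k) : esymm σ R k = 0 := by
  rw [esymm, powersetCard_eq_empty.mpr (by simpa using hk), sum_empty]

theorem MvPolynomial.esymm_fin_eq_zero {R : Type*} [CommSemiring R] {n k : ℕ} (hk : n < k) :
    esymm (Fin n) R k = 0 :=
  esymm_eq_zero_of_card_lt (by simpa using hk)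

namespace Finset

section Sums

variable {M : Type*} [AddCommMonoid M]

theorem sum_range_add_eq_sum_Ico {f : ℕ → M} {N : ℕ} (hf : ∀ k ≥ N, f k = 0) (m : ℕ) :
    ∑ b ∈ range N, f (m + b) = ∑ k ∈ Ico m N, f k := by
  rw [sum_Ico_eq_sum_range]
  exact eventually_constant_sum (fun b hb => hf _ (by omega)) (Nat.sub_le N m)

theorem sum_range_sum_range_eq_sum_diagonals (f : ℕ → ℕ → M) {N : ℕ}
    (hf₁ : ∀ i j, N ≤ i → f i j = 0) (hf₂ : ∀ i j, N ≤ j → f i j = 0) :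
    ∑ i ∈ range N, ∑ j ∈ range N, f i j =
      ∑ b ∈ range N, ∑ c ∈ range N, (f c (c + b) + f (c + b + 1) c) := by
  have hupper : ∀ i, ∑ b ∈ range N, f i (i + b) = ∑ j ∈ Ico i N, f i j :=
    fun i => sum_range_add_eq_sum_Ico (hf₂ i) i
  have hlower : ∀ j, ∑ b ∈ range N, f (j + b + 1) j = ∑ i ∈ Ico (j + 1) N, f i j := fun j => by
    simp only [← sum_range_add_eq_sum_Ico (fun i hi => hf₁ i j hi), add_right_comm]
  have htriangle : ∑ j ∈ range N, ∑ i ∈ Ico (j + 1) N, f i j =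
      ∑ i ∈ range N, ∑ j ∈ range i, f i j :=
    sum_comm' fun j i => by simp only [mem_range, mem_Ico]; omega
  calc ∑ i ∈ range N, ∑ j ∈ range N, f i j
      = ∑ i ∈ range N, (∑ j ∈ Ico i N, f i j + ∑ j ∈ range i, f i j) :=
        sum_congr rfl fun i hi => by rw [add_comm, sum_range_add_sum_Ico _ (mem_range.mp hi).le]
    _ = ∑ c ∈ range N, ∑ b ∈ range N, (f c (c + b) + f (c + b + 1) c) := by
        simp only [sum_add_distrib, ← htriangle, hupper, hlower]
    _ = _ := sum_comm

end Sums

section Alternating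

variable {R : Type*} [Ring R]

theorem sum_range_ite_even_sub (g : ℕ → R) (m : ℕ) :
    ∑ c ∈ range (2 * m), (if Even c then g c - g (c + 1) else 0) =
      ∑ c ∈ range (2 * m), (-1) ^ c * g c := by
  induction m with
  | zero => simp
  | succ m ih =>
    rw [show 2 * (m + 1) = 2 * m + 1 + 1 by ring, sum_range_succ, sum_range_succ, sum_range_succ,
      sum_range_succ, ih, if_pos (even_two_mul m), if_neg (Nat.not_even_two_mul_add_one m),
      (even_two_mul m).neg_one_pow, (odd_two_mul_add_one m).neg_one_pow, one_mul, neg_one_mul]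
    abel

theorem sum_range_ite_even_add (G : ℕ → R) (m : ℕ) :
    ∑ b ∈ range (2 * m), (if Even b then G b + G (b + 2) else 0) =
      ∑ b ∈ range (2 * m), ((-1) ^ b * G b + G (b + 1)) := by
  induction m with
  | zero => simp
  | succ m ih =>
    rw [show 2 * (m + 1) = 2 * m + 1 + 1 by ring, sum_range_succ, sum_range_succ, sum_range_succ,
      sum_range_succ, ih, if_pos (even_two_mul m), if_neg (Nat.not_even_two_mul_add_one m),
      (even_two_mul m).neg_one_pow, (odd_two_mul_add_one m).neg_one_pow, one_mul, neg_one_mul]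
    abel

end Alternating

end Finset

theorem finsum_even_eq_sum_range {M : Type*} [AddCommMonoid M] {F : ℕ → M} {N : ℕ}
    (hF : ∀ b ≥ N, F b = 0) :
    ∑ᶠ (b : ℕ) (_ : Even b), F b = ∑ b ∈ range N, if Even b then F b else 0 := by
  rw [finsum_congr fun b => finsum_eq_if]
  refine finsum_eq_sum_of_support_subset _ fun b hb => ?_
  rw [coe_range, Set.mem_Iio]
  by_contra h
  simp [hF b (not_lt.mp h)] at hb

noncomputable section

namespace TwoColumn

open scoped Classical

variable {n : ℕ}

def countGe (A : Finset (Fin n)) (k : ℕ) : ℕ := #{a ∈ A | k ≤ a.val}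

def gap (P : Finset (Fin n) × Finset (Fin n)) (k : ℕ) : ℤ := countGe P.1 k - countGe P.2 k

def swapAbove (h : ℕ) (P : Finset (Fin n) × Finset (Fin n)) : Finset (Fin n) × Finset (Fin n) :=
  ({a ∈ P.2 | h ≤ a.val} ∪ {a ∈ P.1 | a.val < h},
    {a ∈ P.1 | h ≤ a.val} ∪ {a ∈ P.2 | a.val < h})

def lastPos (P : Finset (Fin n) × Finset (Fin n)) : ℕ := Nat.findGreatest (fun k => 0 < gap P k) n

theorem countGe_zero (A : Finset (Fin n)) : countGe A 0 = #A := by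
  simp [countGe]

theorem countGe_eq_zero (A : Finset (Fin n)) {k : ℕ} (hk : n ≤ k) : countGe A k = 0 := by
  simp only [countGe, card_eq_zero, filter_eq_empty_iff, not_le]
  exact fun a _ => a.isLt.trans_le hk

theorem countGe_le_succ_add_one (A : Finset (Fin n)) (k : ℕ) :
    countGe A k ≤ countGe A (k + 1) + 1 := by
  have hsub : {a ∈ A | k ≤ a.val} ⊆ {a ∈ A | k + 1 ≤ a.val} ∪ {a ∈ A | a.val = k} := by
    intro a
    simp only [mem_filter, mem_union]
    grind
  have hlevel : #{a ∈ A | a.val = k} ≤ 1 :=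
    card_le_one.mpr fun a ha b hb => Fin.ext (by simp only [mem_filter] at ha hb; omega)
  exact (card_le_card hsub).trans ((card_union_le _ _).trans (by unfold countGe; omega))

theorem countGe_succ_le (A : Finset (Fin n)) (k : ℕ) : countGe A (k + 1) ≤ countGe A k :=
  card_le_card (monotone_filter_right _ fun _ _ h => by omega)

theorem gap_eq_zero (P : Finset (Fin n) × Finset (Fin n)) {k : ℕ} (hk : n ≤ k) : gap P k = 0 := by
  simp [gap, countGe_eq_zero _ hk]

theorem gap_swap (P : Finset (Fin n) × Finset (Fin n)) (k : ℕ) : gap P.swap k = -gap P k := by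
  simp [gap]

theorem gap_le_succ_add_one (P : Finset (Fin n) × Finset (Fin n)) (k : ℕ) :
    gap P k ≤ gap P (k + 1) + 1 := by
  have := countGe_le_succ_add_one P.1 k
  have := countGe_succ_le P.2 k
  unfold gap
  omega

theorem swapAbove_swap (h : ℕ) (P : Finset (Fin n) × Finset (Fin n)) :
    (swapAbove h P).swap = swapAbove h P.swap := rfl

theorem swapAbove_swapAbove (h : ℕ) (P : Finset (Fin n) × Finset (Fin n)) :
    swapAbove h (swapAbove h P) = P := by
  ext a <;> simp only [swapAbove, mem_union, mem_filter] <;> grind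

theorem countGe_swapAbove_fst (P : Finset (Fin n) × Finset (Fin n)) {h k : ℕ} (hk : h ≤ k) :
    countGe (swapAbove h P).1 k = countGe P.2 k := by
  unfold countGe swapAbove
  congr 1
  ext a
  simp only [mem_filter, mem_union]
  grind

theorem gap_swapAbove (P : Finset (Fin n) × Finset (Fin n)) {h k : ℕ} (hk : h ≤ k) :
    gap (swapAbove h P) k = gap P.swap k := by
  have h2 := countGe_swapAbove_fst P.swap hk
  rw [← swapAbove_swap] at h2
  simp only [gap, Prod.fst_swap, Prod.snd_swap] at h2 ⊢
  rw [countGe_swapAbove_fst P hk, h2]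

theorem card_swapAbove_fst (h : ℕ) (P : Finset (Fin n) × Finset (Fin n)) :
    (#(swapAbove h P).1 : ℤ) = #P.1 - gap P h := by
  have hdisj : Disjoint {a ∈ P.2 | h ≤ a.val} {a ∈ P.1 | a.val < h} :=
    disjoint_left.mpr fun a ha hb => by simp only [mem_filter] at ha hb; omega
  have hsplit := card_filter_add_card_filter_not (s := P.1) (fun a => h ≤ a.val)
  simp only [not_le] at hsplit
  rw [swapAbove, card_union_of_disjoint hdisj, gap, countGe, countGe]
  omega

theorem card_swapAbove_snd (h : ℕ) (P : Finset (Fin n) × Finset (Fin n)) :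
    (#(swapAbove h P).2 : ℤ) = #P.2 + gap P h := by
  have := card_swapAbove_fst h P.swap
  rw [← swapAbove_swap, gap_swap] at this
  simpa using this

theorem gap_nonpos_of_lastPos_lt (P : Finset (Fin n) × Finset (Fin n)) {k : ℕ}
    (hk : lastPos P < k) : gap P k ≤ 0 := by
  by_cases hkn : k ≤ n
  · exact not_lt.mp ((Nat.findGreatest_eq_iff.mp rfl).2.2 hk hkn)
  · exact (gap_eq_zero P (by omega)).le

theorem gap_lastPos {P : Finset (Fin n) × Finset (Fin n)} (hP : ∃ k, 0 < gap P k) :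
    gap P (lastPos P) = 1 := by
  obtain ⟨k, hk⟩ := hP
  have hkn : k ≤ n := by
    by_contra h
    exact hk.ne' (gap_eq_zero P (by omega))
  have hpos : 0 < gap P (lastPos P) := Nat.findGreatest_spec (P := fun k => 0 < gap P k) hkn hk
  have := gap_le_succ_add_one P (lastPos P)
  have := gap_nonpos_of_lastPos_lt P (lt_add_one (lastPos P))
  omega

theorem lastPos_eq_of_gap_eq {P Q : Finset (Fin n) × Finset (Fin n)}
    (hP : ∃ k, 0 < gap P k) (hQ : ∀ k, lastPos P ≤ k → gap Q k = gap P k) :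
    lastPos Q = lastPos P := by
  refine Nat.findGreatest_eq_iff.mpr ⟨Nat.findGreatest_le n, fun _ => ?_, fun k hk _ => ?_⟩
  · rw [hQ _ le_rfl, gap_lastPos hP]
    exact one_pos
  · rw [hQ k hk.le]
    exact not_lt.mpr (gap_nonpos_of_lastPos_lt P hk)

section Pairs

variable (R : Type*) [CommRing R]

def pairs (p q : ℕ) : Finset (Finset (Fin n) × Finset (Fin n)) :=
  powersetCard p univ ×ˢ powersetCard q univ

def Dominated (P : Finset (Fin n) × Finset (Fin n)) : Prop :=
  ∀ k, countGe P.1 k ≤ countGe P.2 k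

def pairWeight (P : Finset (Fin n) × Finset (Fin n)) : MvPolynomial (Fin n) R :=
  (∏ a ∈ P.1, X a) * ∏ a ∈ P.2, X a

def dominatedSum (p q : ℕ) : MvPolynomial (Fin n) R :=
  ∑ P ∈ pairs p q with Dominated P, pairWeight R P

variable {R}

theorem mem_pairs {p q : ℕ} {P : Finset (Fin n) × Finset (Fin n)} :
    P ∈ pairs p q ↔ #P.1 = p ∧ #P.2 = q := by
  simp [pairs]

theorem not_dominated_iff {P : Finset (Fin n) × Finset (Fin n)} :
    ¬ Dominated P ↔ ∃ k, 0 < gap P k := by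
  simp only [Dominated, gap, not_forall, not_le, sub_pos, Nat.cast_lt]

theorem sum_pairWeight_pairs (p q : ℕ) :
    ∑ P ∈ pairs (n := n) p q, pairWeight R P = esymm (Fin n) R p * esymm (Fin n) R q := by
  rw [esymm, esymm, sum_mul_sum, pairs, sum_product]
  rfl

theorem pairWeight_swapAbove (h : ℕ) (P : Finset (Fin n) × Finset (Fin n)) :
    pairWeight R (swapAbove h P) = pairWeight R P := by
  have hdisj : ∀ A B : Finset (Fin n), Disjoint {a ∈ A | h ≤ a.val} {a ∈ B | a.val < h} :=
    fun A B => disjoint_left.mpr fun a ha hb => by simp only [mem_filter] at ha hb; omega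
  simp only [pairWeight, swapAbove, prod_union (hdisj _ _)]
  rw [← prod_filter_mul_prod_filter_not P.1 (fun a => h ≤ a.val),
    ← prod_filter_mul_prod_filter_not P.2 (fun a => h ≤ a.val)]
  simp only [not_le]
  ring

-- The Lindström–Gessel–Viennot switch of the tails above `lastPos`; `p ≤ q` guarantees that every
-- pair of sizes `(p, q + 1)` has a level where its second set is ahead.
theorem sum_not_dominated {p q : ℕ} (hpq : p ≤ q) :
    ∑ P ∈ pairs (p + 1) q with ¬ Dominated P, pairWeight R P =
      esymm (Fin n) R p * esymm (Fin n) R (q + 1) := by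
  rw [← sum_pairWeight_pairs]
  have hpos_swap : ∀ Q ∈ pairs (n := n) p (q + 1), ∃ k, 0 < gap Q.swap k := fun Q hQ =>
    ⟨0, by simp only [gap, countGe_zero, Prod.fst_swap, Prod.snd_swap, (mem_pairs.mp hQ).1,
      (mem_pairs.mp hQ).2]; omega⟩
  refine sum_nbij' (fun P => swapAbove (lastPos P) P) (fun Q => swapAbove (lastPos Q.swap) Q)
    ?_ ?_ ?_ ?_ ?_
  · intro P hP
    simp only [mem_filter, not_dominated_iff, mem_pairs] at hP
    obtain ⟨⟨h1, h2⟩, hpos⟩ := hP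
    have hcut := gap_lastPos hpos
    have c1 := card_swapAbove_fst (lastPos P) P
    have c2 := card_swapAbove_snd (lastPos P) P
    rw [mem_pairs]
    omega
  · intro Q hQ
    have hcut := gap_lastPos (hpos_swap Q hQ)
    rw [mem_pairs] at hQ
    have c1 := card_swapAbove_fst (lastPos Q.swap) Q
    have c2 := card_swapAbove_snd (lastPos Q.swap) Q
    rw [gap_swap] at hcut
    simp only [mem_filter, not_dominated_iff, mem_pairs]
    refine ⟨by omega, lastPos Q.swap, ?_⟩
    rw [gap_swapAbove Q le_rfl, gap_swap]
    omega
  · intro P hP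
    simp only [mem_filter, not_dominated_iff] at hP
    have hcut : lastPos (swapAbove (lastPos P) P).swap = lastPos P :=
      lastPos_eq_of_gap_eq hP.2 fun k hk => by
        rw [gap_swap, gap_swapAbove P hk, gap_swap, neg_neg]
    simp only [hcut, swapAbove_swapAbove]
  · intro Q hQ
    have hcut : lastPos (swapAbove (lastPos Q.swap) Q) = lastPos Q.swap :=
      lastPos_eq_of_gap_eq (hpos_swap Q hQ) fun k hk => gap_swapAbove Q hk
    simp only [hcut, swapAbove_swapAbove]
  · intro P _
    exact (pairWeight_swapAbove _ P).symm

theorem dominatedSum_succ {p q : ℕ} (hpq : p ≤ q) :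
    dominatedSum (n := n) R (p + 1) q =
      esymm (Fin n) R (p + 1) * esymm (Fin n) R q -
        esymm (Fin n) R p * esymm (Fin n) R (q + 1) := by
  rw [← sum_pairWeight_pairs, ← sum_filter_add_sum_filter_not _ Dominated, sum_not_dominated hpq,
    dominatedSum, add_sub_cancel_right]

theorem dominatedSum_zero (q : ℕ) : dominatedSum (n := n) R 0 q = esymm (Fin n) R q := by
  rw [dominatedSum, filter_true_of_mem, sum_pairWeight_pairs, esymm_zero, one_mul]
  intro P hP k
  simp [card_eq_zero.mp (mem_pairs.mp hP).1, countGe]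

theorem dominatedSum_eq_zero {p : ℕ} (hp : n < p) (q : ℕ) : dominatedSum (n := n) R p q = 0 := by
  rw [dominatedSum, pairs, powersetCard_eq_empty.mpr (by simpa using hp)]
  simp

end Pairs

section Tableaux

theorem countGe_image {p : ℕ} {L : Fin p → Fin n} (hL : Function.Injective L) (k : ℕ) :
    countGe (image L univ) k = #{j | k ≤ (L j).val} := by
  rw [countGe, filter_image, card_image_of_injective _ hL]

theorem rowCondition_iff_dominated {p q b : ℕ} (hq : b + p = q) {L : Fin p → Fin n}
    {R : Fin q → Fin n} (hL : StrictMono L) (hR : StrictMono R) :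
    (∀ (j : ℕ) (hj : j < p) (hbj : b + j < q), L ⟨j, hj⟩ ≤ R ⟨b + j, hbj⟩) ↔
      Dominated (image L univ, image R univ) := by
  simp only [Dominated, countGe_image hL.injective, countGe_image hR.injective]
  constructor
  · intro hrow k
    refine card_le_card_of_injOn (fun j => ⟨b + j, by omega⟩) (fun j hj => ?_)
      (fun i _ j _ hij => Fin.ext (by simpa using congrArg Fin.val hij))
    simp only [coe_filter, mem_univ, true_and, Set.mem_ofPred_eq] at hj ⊢
    exact hj.trans (hrow j j.isLt _)
  · intro hdom j hj hbj
    by_contra hlt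
    rw [not_le] at hlt
    have hL_top : Ici (⟨j, hj⟩ : Fin p) ⊆ ({j' | (L ⟨j, hj⟩).val ≤ (L j').val} : Finset _) := by
      intro j' hj'
      simp only [mem_Ici] at hj'
      simpa using hL.monotone hj'
    have hR_top : ({i | (L ⟨j, hj⟩).val ≤ (R i).val} : Finset _) ⊆ Ioi ⟨b + j, hbj⟩ := by
      intro i hi
      simp only [mem_filter, mem_univ, true_and] at hi
      exact mem_Ioi.mpr (hR.lt_iff_lt.mp (hlt.trans_le (Fin.le_def.mpr hi)))
    have h1 := card_le_card hL_top
    have h2 := card_le_card hR_top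
    have h3 := hdom (L ⟨j, hj⟩).val
    simp only [Fin.card_Ici, Fin.card_Ioi] at h1 h2
    omega

theorem isTab_zero_iff {b c : ℕ} {T : (Fin (0 + c) → Fin n) × (Fin (b + c) → Fin n)} :
    IsTab n 0 b c T ↔
      StrictMono T.1 ∧ StrictMono T.2 ∧ Dominated (image T.1 univ, image T.2 univ) := by
  refine and_congr_right fun hL => and_congr_right fun hR => ?_
  rw [← rowCondition_iff_dominated (show b + (0 + c) = b + c by omega) hL hR]
  exact forall_congr' fun j => ⟨fun h hj => h (by omega) hj, fun h _ => h⟩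

theorem tabCh_eq_dominatedSum (b c : ℕ) :
    tabCh n 0 b c {T | IsTab n 0 b c T} = dominatedSum (n := n) ℤ c (b + c) := by
  rw [tabCh, finsum_mem_eq_toFinset_sum, dominatedSum]
  have hcard : ∀ P ∈ {P ∈ pairs (n := n) c (b + c) | Dominated P}, #P.1 = 0 + c ∧ #P.2 = b + c :=
    fun P hP => by rw [mem_filter, mem_pairs] at hP; omega
  refine sum_bij' (fun T _ => (image T.1 univ, image T.2 univ))
    (fun P hP => ((P.1.orderEmbOfFin (hcard P hP).1 : Fin (0 + c) → Fin n),
      (P.2.orderEmbOfFin (hcard P hP).2 : Fin (b + c) → Fin n))) ?_ ?_ ?_ ?_ ?_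
  · intro T hT
    rw [Set.mem_toFinset, Set.mem_ofPred_eq, isTab_zero_iff] at hT
    obtain ⟨hL, hR, hdom⟩ := hT
    rw [mem_filter, mem_pairs, card_image_of_injective _ hL.injective,
      card_image_of_injective _ hR.injective]
    simp only [card_univ, Fintype.card_fin, zero_add]
    exact ⟨⟨trivial, trivial⟩, hdom⟩
  · intro P hP
    rw [Set.mem_toFinset, Set.mem_ofPred_eq, isTab_zero_iff]
    refine ⟨(P.1.orderEmbOfFin _).strictMono, (P.2.orderEmbOfFin _).strictMono, ?_⟩
    simp only [image_orderEmbOfFin_univ]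
    exact (mem_filter.mp hP).2
  · intro T hT
    rw [Set.mem_toFinset, Set.mem_ofPred_eq] at hT
    exact Prod.ext (orderEmbOfFin_unique _ (fun _ => mem_image_of_mem _ (mem_univ _)) hT.1).symm
      (orderEmbOfFin_unique _ (fun _ => mem_image_of_mem _ (mem_univ _)) hT.2.1).symm
  · intro P _
    simp only [image_orderEmbOfFin_univ]
  · intro T hT
    rw [Set.mem_toFinset, Set.mem_ofPred_eq] at hT
    rw [tabWt, pairWeight, prod_image hT.1.injective.injOn, prod_image hT.2.1.injective.injOn]

end Tableaux

section AltE

variable (R : Type*) [CommRing R]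

def altE (n b : ℕ) : MvPolynomial (Fin n) R :=
  ∑ c ∈ range (n + 1), (-1) ^ c * (esymm (Fin n) R c * esymm (Fin n) R (b + c))

variable {R}

theorem sum_range_eq_altE {N : ℕ} (hN : n + 1 ≤ N) (b : ℕ) :
    ∑ c ∈ range N, (-1) ^ c * (esymm (Fin n) R c * esymm (Fin n) R (b + c)) = altE R n b :=
  eventually_constant_sum (fun c hc => by simp [esymm_fin_eq_zero hc]) hN

theorem altE_eq_zero {b : ℕ} (hb : n < b) : altE R n b = 0 :=
  sum_eq_zero fun c _ => by simp [esymm_fin_eq_zero (n := n) (k := b + c) (by omega)]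

theorem sum_alternating_dominatedSum (b : ℕ) :
    ∑ c ∈ range (2 * (n + 1)), (-1) ^ c * dominatedSum (n := n) R c (b + c) =
      altE R n b + altE R n (b + 2) := by
  have hterm : ∀ c, (-1) ^ (c + 1) * dominatedSum (n := n) R (c + 1) (b + (c + 1)) =
      (-1) ^ (c + 1) * (esymm (Fin n) R (c + 1) * esymm (Fin n) R (b + (c + 1))) +
        (-1) ^ c * (esymm (Fin n) R c * esymm (Fin n) R (b + 2 + c)) := fun c => by
    rw [dominatedSum_succ (by omega), show b + (c + 1) + 1 = b + 2 + c by ring]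
    ring
  rw [← sum_range_eq_altE (N := 2 * n + 1 + 1) (by omega), ← sum_range_eq_altE (N := 2 * n + 1)
    (by omega), show 2 * (n + 1) = 2 * n + 1 + 1 by ring,
    sum_range_succ' (fun c => (-1) ^ c * dominatedSum (n := n) R c (b + c)),
    sum_range_succ' (fun c => (-1) ^ c * (esymm (Fin n) R c * esymm (Fin n) R (b + c))),
    sum_congr rfl fun c _ => hterm c, sum_add_distrib, dominatedSum_zero]
  simp only [pow_zero, esymm_zero, add_zero, one_mul]
  abel

theorem sum_mul_sum_alternating :
    (∑ i ∈ range (n + 1), esymm (Fin n) R i) *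
        (∑ i ∈ range (n + 1), (-1) ^ i * esymm (Fin n) R i) =
      ∑ b ∈ range (n + 1), ((-1) ^ b * altE R n b + altE R n (b + 1)) := by
  rw [sum_mul_sum, sum_range_sum_range_eq_sum_diagonals
    (fun i j => esymm (Fin n) R i * ((-1) ^ j * esymm (Fin n) R j))
    (fun i j hi => by simp [esymm_fin_eq_zero (n := n) (k := i) (by omega)])
    (fun i j hj => by simp [esymm_fin_eq_zero (n := n) (k := j) (by omega)])]
  refine sum_congr rfl fun b _ => ?_
  rw [sum_add_distrib, altE, altE, mul_sum]
  refine congrArg₂ (· + ·) (sum_congr rfl fun c _ => ?_) (sum_congr rfl fun c _ => ?_)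
  · rw [add_comm c b, pow_add]
    ring
  · rw [show c + b + 1 = b + 1 + c by ring]
    ring

end AltE

end TwoColumn

end

open TwoColumn

theorem ch_d_infinity_zero_diff_general (n : ℕ) :
    (∑ᶠ (b : ℕ) (_ : Even b) (c : ℕ) (_ : Even c),
        (tabCh n 0 b c {T | IsTab n 0 b c T} -
          tabCh n 0 b (c + 1) {T | IsTab n 0 b (c + 1) T})) =
      (∑ i ∈ Finset.range (n + 1), esymm (Fin n) ℤ i) *
        (∑ i ∈ Finset.range (n + 1), (-1) ^ i * esymm (Fin n) ℤ i) := by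
  have hinner : ∀ b, ∑ᶠ (c : ℕ) (_ : Even c), (tabCh n 0 b c {T | IsTab n 0 b c T} -
      tabCh n 0 b (c + 1) {T | IsTab n 0 b (c + 1) T}) = altE ℤ n b + altE ℤ n (b + 2) := by
    intro b
    simp only [tabCh_eq_dominatedSum]
    rw [finsum_even_eq_sum_range (N := 2 * (n + 1)) fun c hc => by
        rw [dominatedSum_eq_zero (by omega), dominatedSum_eq_zero (by omega), sub_self],
      sum_range_ite_even_sub (fun c => dominatedSum ℤ c (b + c)), sum_alternating_dominatedSum]
  rw [finsum_congr fun b => finsum_congr fun _ => hinner b,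
    finsum_even_eq_sum_range (N := 2 * (n + 1)) fun b hb => by
      rw [altE_eq_zero (by omega), altE_eq_zero (by omega), add_zero],
    sum_range_ite_even_add, sum_mul_sum_alternating,
    eventually_constant_sum (N := n + 1) (fun b hb => by
      rw [altE_eq_zero (by omega), altE_eq_zero (by omega), mul_zero, add_zero]) (by omega)]

/-- `Σ_{b,c≥0 even} ( ch SST_n(λ(0,b,c)) − ch SST_n(λ(0,b,c+1)) )
  = ( Σ_{i=0}^{n} e_i ) · ( Σ_{i=0}^{n} (−1)^i e_i )` in `ℤ[x_1,…,x_n]`.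
(When `a = 0` every tableau has residue `0`, so no residue condition is imposed; all but
finitely many summands vanish.) -/
theorem ch_d_infinity_zero_diff (n : ℕ) (hn : 1 ≤ n) :
    (∑ᶠ (b : ℕ) (_ : Even b) (c : ℕ) (_ : Even c),
        (tabCh n 0 b c {T | IsTab n 0 b c T} -
          tabCh n 0 b (c + 1) {T | IsTab n 0 b (c + 1) T})) =
      (∑ i ∈ Finset.range (n + 1), esymm (Fin n) ℤ i) *
        (∑ i ∈ Finset.range (n + 1), (-1) ^ i * esymm (Fin n) ℤ i) :=
  ch_d_infinity_zero_diff_general n
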